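/- Fix μ > 0, n ≥ 1 and γ₁, …, γₙ > 0. Define the composed density recursively by q₁(x,t) = Q(x;t,μ,γ₁) and q_{k+1}(x,t) = ∫₀^∞ q_k(x,s) Q(s;t,μ,γ_{k+1}) ds, corresponding to the iterated process G¹_{γ₁}(G²_{γ₂}(… Gⁿ_{γₙ}(t) …)). Then for every t > 0 and every real η such that (η−1)/(γ₁γ₂⋯γ_k) + μ > 0 for all 1 ≤ k ≤ n, one has ∫₀^∞ x^(η−1) q_n(x,t) dx = ( ∏_{k=1}^n Γ( (η−1)/(γ₁γ₂⋯γ_k) + μ ) / Γ(μ) ) · t^((η−1)/(γ₁γ₂⋯γₙ)). -/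

import Mathlib

/-!
The Mellin transform of `x ↦ x ^ a * Q(x;t,μ,γ)` over `(0,∞)` is `Γ(a/γ + μ)/Γ(μ) · t^(a/γ)`,
a pure power of `t`. So if `∫ x^(η-1) q_k(x,s) dx = C_k s^(a_k)`, Tonelli applied to
`q_{k+1}(x,t) = ∫ q_k(x,s) Q(s;t,μ,γ_{k+1}) ds` gives `C_k Γ(a_k/γ_{k+1} + μ)/Γ(μ) · t^(a_k/γ_{k+1})`:
each level contributes one Gamma factor and divides the exponent of `t` by its `γ`.
-/

open MeasureTheory

/-- The generalized Gamma density `Q(x;t,μ,γ) = γ x^(γμ−1) e^(−x^γ/t) / (t^μ Γ(μ))`. -/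
noncomputable def Q (x t μ γ : ℝ) : ℝ :=
  γ * x ^ (γ * μ - 1) * Real.exp (-(x ^ γ) / t) / (t ^ μ * Real.Gamma μ)

/-- The composed density of `G¹_{γ₁}(G²_{γ₂}(… Gⁿ_{γₙ}(t) …))`:
`q₁(x,t) = Q(x;t,μ,γ 0)` and `q_{k+1}(x,t) = ∫₀^∞ q_k(x,s) Q(s;t,μ,γ k) ds`. -/
noncomputable def qGn (μ : ℝ) (γ : ℕ → ℝ) : ℕ → ℝ → ℝ → ℝ
  | 0 => fun x t => Q x t μ (γ 0)
  | (k + 1) => fun x t => ∫ s in Set.Ioi (0:ℝ), qGn μ γ k x s * Q s t μ (γ (k + 1))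

open Set Real Function

section WeightedMixture

variable {α β : Type*} [MeasurableSpace α] [MeasurableSpace β] {μ : Measure α} {ν : Measure β}
  [SFinite μ] [SFinite ν] {w : α → ℝ} {f : α → β → ℝ} {g h : β → ℝ}

theorem integrable_prod_weighted_mixture
    (hF : AEStronglyMeasurable (fun p : α × β => w p.1 * (f p.1 p.2 * g p.2)) (μ.prod ν))
    (hwf : ∀ᵐ y ∂ν, ∀ᵐ x ∂μ, 0 ≤ w x * f x y) (hg : 0 ≤ᵐ[ν] g)
    (hint : ∀ᵐ y ∂ν, Integrable (fun x => w x * f x y) μ)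
    (hval : ∀ᵐ y ∂ν, ∫ x, w x * f x y ∂μ = h y) (hh : Integrable (fun y => h y * g y) ν) :
    Integrable (fun p : α × β => w p.1 * (f p.1 p.2 * g p.2)) (μ.prod ν) := by
  refine (integrable_prod_iff' hF).2 ⟨?_, hh.congr ?_⟩
  · filter_upwards [hint] with y hy
    simpa only [mul_assoc] using hy.mul_const (g y)
  · filter_upwards [hwf, hg, hval] with y hwfy hgy hvaly
    rw [← hvaly, ← integral_mul_const]
    refine integral_congr_ae ?_
    filter_upwards [hwfy] with x hx
    rw [← mul_assoc, Real.norm_of_nonneg (mul_nonneg hx hgy)]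

theorem integrable_and_integral_weighted_mixture
    (hF : AEStronglyMeasurable (fun p : α × β => w p.1 * (f p.1 p.2 * g p.2)) (μ.prod ν))
    (hwf : ∀ᵐ y ∂ν, ∀ᵐ x ∂μ, 0 ≤ w x * f x y) (hg : 0 ≤ᵐ[ν] g)
    (hint : ∀ᵐ y ∂ν, Integrable (fun x => w x * f x y) μ)
    (hval : ∀ᵐ y ∂ν, ∫ x, w x * f x y ∂μ = h y) (hh : Integrable (fun y => h y * g y) ν) :
    Integrable (fun x => w x * ∫ y, f x y * g y ∂ν) μ ∧
      ∫ x, w x * ∫ y, f x y * g y ∂ν ∂μ = ∫ y, h y * g y ∂ν := by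
  have hprod := integrable_prod_weighted_mixture hF hwf hg hint hval hh
  have inner (x : α) : ∫ y, w x * (f x y * g y) ∂ν = w x * ∫ y, f x y * g y ∂ν :=
    integral_const_mul _ _
  refine ⟨by simpa only [inner] using hprod.integral_prod_left, ?_⟩
  calc ∫ x, w x * ∫ y, f x y * g y ∂ν ∂μ = ∫ x, ∫ y, w x * (f x y * g y) ∂ν ∂μ := by
        simp only [inner]
    _ = ∫ y, ∫ x, w x * (f x y * g y) ∂μ ∂ν := integral_integral_swap hprod
    _ = ∫ y, h y * g y ∂ν := by
        refine integral_congr_ae ?_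
        filter_upwards [hval] with y hy
        simp only [← hy, ← integral_mul_const, mul_assoc]

end WeightedMixture

theorem Q_nonneg {x t μ γ : ℝ} (hx : 0 ≤ x) (ht : 0 ≤ t) (hμ : 0 ≤ μ) (hγ : 0 ≤ γ) :
    0 ≤ Q x t μ γ := by
  have := Gamma_nonneg_of_nonneg hμ
  unfold Q
  positivity

theorem measurable_Q (μ γ : ℝ) : Measurable fun p : ℝ × ℝ => Q p.1 p.2 μ γ := by
  unfold Q
  fun_prop

theorem rpow_mul_Q {x t μ γ : ℝ} (a : ℝ) (hx : 0 < x) :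
    x ^ a * Q x t μ γ
      = γ / (t ^ μ * Gamma μ) * (x ^ (a + γ * μ - 1) * exp (-(1 / t) * x ^ γ)) := by
  rw [show a + γ * μ - 1 = a + (γ * μ - 1) by ring, rpow_add hx, Q]
  ring_nf

theorem neg_one_lt_add_mul_sub_one {a γ μ : ℝ} (hγ : 0 < γ) (ha : 0 < a / γ + μ) :
    -1 < a + γ * μ - 1 := by
  have := mul_pos hγ ha
  rw [mul_add, mul_div_cancel₀ a hγ.ne'] at this
  linarith

theorem integrableOn_rpow_mul_Q {t μ γ a : ℝ} (ht : 0 < t) (hγ : 0 < γ) (ha : 0 < a / γ + μ) :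
    IntegrableOn (fun x => x ^ a * Q x t μ γ) (Ioi 0) := by
  have hq := neg_one_lt_add_mul_sub_one hγ ha
  exact IntegrableOn.congr_fun
    ((integrableOn_rpow_mul_exp_neg_mul_rpow hq hγ (one_div_pos.2 ht)).const_mul _)
    (fun x hx => (rpow_mul_Q a hx).symm) measurableSet_Ioi

theorem integral_rpow_mul_Q {t μ γ a : ℝ} (ht : 0 < t) (hγ : 0 < γ) (ha : 0 < a / γ + μ) :
    ∫ x in Ioi 0, x ^ a * Q x t μ γ = Gamma (a / γ + μ) / Gamma μ * t ^ (a / γ) := by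
  have hq := neg_one_lt_add_mul_sub_one hγ ha
  have hexp : (a + γ * μ - 1 + 1) / γ = a / γ + μ := by field_simp; ring
  rw [setIntegral_congr_fun measurableSet_Ioi (fun x hx => rpow_mul_Q a hx), integral_const_mul,
    integral_rpow_mul_exp_neg_mul_rpow hγ hq (one_div_pos.2 ht), neg_div, hexp, one_div,
    inv_rpow ht.le, ← rpow_neg ht.le, neg_neg, rpow_add ht]
  field_simp

theorem mellin_subordinate_Q {f : ℝ → ℝ → ℝ} {p c a t μ γ : ℝ} (hf : Measurable (uncurry f))
    (hf_nonneg : ∀ x > 0, ∀ s > 0, 0 ≤ f x s)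
    (hf_int : ∀ s > 0, IntegrableOn (fun x => x ^ p * f x s) (Ioi 0))
    (hf_val : ∀ s > 0, ∫ x in Ioi 0, x ^ p * f x s = c * s ^ a)
    (ht : 0 < t) (hμ : 0 < μ) (hγ : 0 < γ) (ha : 0 < a / γ + μ) :
    IntegrableOn (fun x => x ^ p * ∫ s in Ioi 0, f x s * Q s t μ γ) (Ioi 0) ∧
      ∫ x in Ioi 0, x ^ p * ∫ s in Ioi 0, f x s * Q s t μ γ
        = c * (Gamma (a / γ + μ) / Gamma μ * t ^ (a / γ)) := by
  have hpos : ∀ᵐ s ∂(volume.restrict (Ioi (0 : ℝ))), 0 < s := ae_restrict_mem measurableSet_Ioi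
  have hmeas : Measurable fun q : ℝ × ℝ => q.1 ^ p * (f q.1 q.2 * Q q.2 t μ γ) :=
    (measurable_fst.pow_const p).mul
      (hf.mul ((measurable_Q μ γ).comp (measurable_snd.prodMk measurable_const)))
  obtain ⟨hint, hval⟩ := integrable_and_integral_weighted_mixture (h := fun s => c * s ^ a)
    hmeas.aestronglyMeasurable
    (by filter_upwards [hpos] with s hs
        filter_upwards [hpos] with x hx
        exact mul_nonneg (rpow_nonneg hx.le p) (hf_nonneg x hx s hs))
    (by filter_upwards [hpos] with s hs using Q_nonneg hs.le ht.le hμ.le hγ.le)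
    (by filter_upwards [hpos] with s hs using hf_int s hs)
    (by filter_upwards [hpos] with s hs using hf_val s hs)
    (by simpa only [mul_assoc] using (integrableOn_rpow_mul_Q ht hγ ha).const_mul c)
  refine ⟨hint, hval.trans ?_⟩
  simp only [mul_assoc, integral_const_mul, integral_rpow_mul_Q ht hγ ha]

theorem measurable_uncurry_qGn (μ : ℝ) (γ : ℕ → ℝ) (k : ℕ) :
    Measurable (uncurry (qGn μ γ k)) := by
  induction k with
  | zero => exact measurable_Q μ (γ 0)
  | succ k ih =>
    refine StronglyMeasurable.measurable (StronglyMeasurable.integral_prod_right'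
      (f := fun q : (ℝ × ℝ) × ℝ => qGn μ γ k q.1.1 q.2 * Q q.2 q.1.2 μ (γ (k + 1))) ?_)
    exact ((ih.comp (measurable_fst.fst.prodMk measurable_snd)).mul
      ((measurable_Q μ _).comp (measurable_snd.prodMk measurable_fst.snd))).stronglyMeasurable

theorem qGn_nonneg {μ : ℝ} (hμ : 0 ≤ μ) {γ : ℕ → ℝ} {k : ℕ} (hγ : ∀ i ≤ k, 0 ≤ γ i) {x t : ℝ}
    (hx : 0 ≤ x) (ht : 0 ≤ t) : 0 ≤ qGn μ γ k x t := by
  induction k generalizing t with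
  | zero => exact Q_nonneg hx ht hμ (hγ 0 le_rfl)
  | succ k ih =>
    exact setIntegral_nonneg measurableSet_Ioi fun s hs =>
      mul_nonneg (ih (fun i hi => hγ i (by omega)) (le_of_lt hs))
        (Q_nonneg (le_of_lt hs) ht hμ (hγ _ le_rfl))

theorem mellin_qGn {μ η : ℝ} (hμ : 0 < μ) {γ : ℕ → ℝ} (k : ℕ) (hγ : ∀ i ≤ k, 0 < γ i)
    (hη : ∀ j ≤ k, 0 < (η - 1) / (∏ i ∈ Finset.range (j + 1), γ i) + μ) {t : ℝ} (ht : 0 < t) :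
    IntegrableOn (fun x => x ^ (η - 1) * qGn μ γ k x t) (Ioi 0) ∧
      ∫ x in Ioi 0, x ^ (η - 1) * qGn μ γ k x t
        = (∏ j ∈ Finset.range (k + 1),
            Gamma ((η - 1) / (∏ i ∈ Finset.range (j + 1), γ i) + μ) / Gamma μ)
          * t ^ ((η - 1) / ∏ i ∈ Finset.range (k + 1), γ i) := by
  induction k generalizing t with
  | zero =>
    have ha : 0 < (η - 1) / γ 0 + μ := by simpa using hη 0 le_rfl
    simp only [qGn, zero_add, Finset.prod_range_one]
    exact ⟨integrableOn_rpow_mul_Q ht (hγ 0 le_rfl) ha, integral_rpow_mul_Q ht (hγ 0 le_rfl) ha⟩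
  | succ k ih =>
    have hP : ∏ i ∈ Finset.range (k + 2), γ i = (∏ i ∈ Finset.range (k + 1), γ i) * γ (k + 1) :=
      Finset.prod_range_succ _ _
    have ha : 0 < (η - 1) / (∏ i ∈ Finset.range (k + 1), γ i) / γ (k + 1) + μ := by
      simpa only [hP, div_div] using hη (k + 1) le_rfl
    have ih' := fun s (hs : 0 < s) =>
      ih (fun i hi => hγ i (by omega)) (fun j hj => hη j (by omega)) hs
    obtain ⟨hint, hval⟩ := mellin_subordinate_Q (measurable_uncurry_qGn μ γ k)
      (fun x hx s hs => qGn_nonneg hμ.le (fun i hi => (hγ i (by omega)).le) hx.le hs.le)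
      (fun s hs => (ih' s hs).1) (fun s hs => (ih' s hs).2) ht hμ (hγ (k + 1) le_rfl) ha
    refine ⟨hint, hval.trans ?_⟩
    rw [Finset.prod_range_succ _ (k + 1), hP, div_div, mul_assoc]

/-- the Mellin transform of the density of the iterated process
`G¹_{γ₁}(G²_{γ₂}(… Gⁿ_{γₙ}(t) …))` equals
`(∏ₖ Γ((η−1)/(γ₁⋯γₖ) + μ)/Γ(μ)) · t^((η−1)/(γ₁⋯γₙ))`. -/
theorem stmt_11 (μ : ℝ) (hμ : 0 < μ) (n : ℕ) (hn : 1 ≤ n) (γ : ℕ → ℝ)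
    (hγ : ∀ k < n, 0 < γ k) (t η : ℝ) (ht : 0 < t)
    (hη : ∀ k, 1 ≤ k → k ≤ n → 0 < (η - 1) / (∏ i ∈ Finset.range k, γ i) + μ) :
    (∫ x in Set.Ioi (0:ℝ), x ^ (η - 1) * qGn μ γ (n - 1) x t)
      = (∏ k ∈ Finset.range n,
          Real.Gamma ((η - 1) / (∏ i ∈ Finset.range (k + 1), γ i) + μ) / Real.Gamma μ)
        * t ^ ((η - 1) / (∏ i ∈ Finset.range n, γ i)) := by
  obtain ⟨k, rfl⟩ : ∃ k, n = k + 1 := ⟨n - 1, by omega⟩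
  exact (mellin_qGn hμ k (fun i hi => hγ i (by omega))
    (fun j hj => hη (j + 1) (by omega) (by omega)) ht).2
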